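/- arXiv:2605.25395 — 8 statements merged into one kernel-verified Lean document; each statement's English description precedes it below -/
import Mathlib

section
/- Let f : ℝ^d → ℝ be convex with L-Lipschitz gradient and a minimizer x*. Fix γ ∈ [0,1), set α = 1/L, c_t = 1 + γ/(4(1-γ)) + t/4, and β_t = (c_t - γ c_{t+1})/(1 + (1-γ) c_{t+1}). Run EMA-Nesterov with gradient-descent base step. Then for every T ≥ 1, f(x^T) - f(x*) ≤ (97 L)/(2 (1-γ)³ T²) · ‖x^0 - x*‖². -/
/-!
Write `u = 1 - γ`. The extrapolated point `z^t = x^t + c_t m^t` moves by a plain gradient step,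
`z^{t+1} = z^t - (θ_t / L) ∇f(y^t)` with `θ_t = 1 + u c_{t+1}`, and `z^t - y^t = ρ_t (y^t - x^t)`
with `c_t = (1 + ρ_t) β_t`. The estimate-sequence argument for convex `L`-smooth `f` (descent lemma
at `y^t`, first-order convexity at `x^t` and `x*`) shows that the potential
`θ_t ρ_t (f(x^t) - f(x*)) + (L/2) ‖z^t - x*‖²` is nonincreasing, provided `θ_t ≤ 1 + ρ_t` and
`θ_{t+1} ρ_{t+1} ≤ θ_t (1 + ρ_t)`; both are polynomial inequalities in `u ∈ (0, 1]` and `t`.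
Finally `θ_T ρ_T ≥ u T² / 16`, while the initial potential is at most
`97 / (16 u²) · (L/2) ‖x^0 - x*‖²`.
-/

open Set
open scoped RealInnerProductSpace Gradient

section SmoothConvex

variable {E : Type*} [NormedAddCommGroup E] [InnerProductSpace ℝ E] [CompleteSpace E]
  {f : E → ℝ} {L : ℝ}

theorem hasDerivAt_comp_add_smul {a v : E} {s : ℝ} (hf : DifferentiableAt ℝ f (a + s • v)) :
    HasDerivAt (fun s : ℝ => f (a + s • v)) ⟪∇ f (a + s • v), v⟫ s := by
  have hline : HasDerivAt (fun s : ℝ => a + s • v) v s := by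
    simpa using ((hasDerivAt_id s).smul_const v).const_add a
  rw [inner_gradient_left]
  exact hf.hasFDerivAt.comp_hasDerivAt s hline

theorem ConvexOn.inner_gradient_le_sub (hconv : ConvexOn ℝ univ f) (hf : Differentiable ℝ f)
    (a b : E) : ⟪∇ f a, b - a⟫ ≤ f b - f a := by
  have hline : ConvexOn ℝ univ (fun s : ℝ => f (a + s • (b - a))) := by
    have heq : (fun s : ℝ => f (a + s • (b - a))) = f ∘ AffineMap.lineMap a b := by
      funext s
      simp [AffineMap.lineMap_apply_module', add_comm]
    simpa [heq] using hconv.comp_affineMap (AffineMap.lineMap a b)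
  have h := hline.le_slope_of_hasDerivAt (mem_univ 0) (mem_univ 1) one_pos
    (hasDerivAt_comp_add_smul (hf _))
  simpa [slope_def_field] using h

theorem sub_le_inner_gradient_add_sq (hf : Differentiable ℝ f)
    (hlip : ∀ z w, ‖∇ f z - ∇ f w‖ ≤ L * ‖z - w‖) (a b : E) :
    f b - f a ≤ ⟪∇ f a, b - a⟫ + L / 2 * ‖b - a‖ ^ 2 := by
  set v := b - a
  have hderiv (s : ℝ) := hasDerivAt_comp_add_smul (a := a) (v := v) (s := s) (hf _)
  have hB (s : ℝ) : HasDerivAt (fun s : ℝ => f a + s * ⟪∇ f a, v⟫ + L / 2 * s ^ 2 * ‖v‖ ^ 2)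
      (⟪∇ f a, v⟫ + L * s * ‖v‖ ^ 2) s := by
    refine ((((hasDerivAt_id' s).mul_const ⟪∇ f a, v⟫).const_add (f a)).fun_add
      (((hasDerivAt_pow 2 s).const_mul (L / 2)).mul_const (‖v‖ ^ 2))).congr_deriv ?_
    ring
  have hbound (s : ℝ) (hs : 0 ≤ s) : ⟪∇ f (a + s • v), v⟫ ≤ ⟪∇ f a, v⟫ + L * s * ‖v‖ ^ 2 := by
    have h := real_inner_le_norm (∇ f (a + s • v) - ∇ f a) v
    have hl := hlip (a + s • v) a
    rw [inner_sub_left] at h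
    rw [add_sub_cancel_left, norm_smul, Real.norm_of_nonneg hs] at hl
    nlinarith [norm_nonneg v]
  have key := image_le_of_deriv_right_le_deriv_boundary (a := 0) (b := 1)
    (fun s _ => (hderiv s).continuousAt.continuousWithinAt) (fun s _ => (hderiv s).hasDerivWithinAt)
    (by simp) (fun s _ => (hB s).continuousAt.continuousWithinAt) (fun s _ => (hB s).hasDerivWithinAt)
    (fun s hs => hbound s hs.1) (right_mem_Icc.2 zero_le_one)
  simp only [one_smul, v, add_sub_cancel] at key
  linarith

theorem IsLocalMin.gradient_eq_zero {a : E} (h : IsLocalMin f a) : ∇ f a = 0 := by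
  rw [gradient, h.fderiv_eq_zero, map_zero]

theorem sub_le_sq_of_isMin (hf : Differentiable ℝ f)
    (hlip : ∀ z w, ‖∇ f z - ∇ f w‖ ≤ L * ‖z - w‖) {xstar : E} (hmin : ∀ z, f xstar ≤ f z)
    (a : E) : f a - f xstar ≤ L / 2 * ‖a - xstar‖ ^ 2 := by
  have h := sub_le_inner_gradient_add_sq hf hlip xstar a
  rwa [IsLocalMin.gradient_eq_zero (.of_forall hmin), inner_zero_left, zero_add] at h

theorem apply_gradient_step_le (hL : 0 < L) (hf : Differentiable ℝ f)
    (hlip : ∀ z w, ‖∇ f z - ∇ f w‖ ≤ L * ‖z - w‖) (y : E) :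
    f (y - (1 / L) • ∇ f y) ≤ f y - 1 / (2 * L) * ‖∇ f y‖ ^ 2 := by
  have h := sub_le_inner_gradient_add_sq hf hlip y (y - (1 / L) • ∇ f y)
  rw [sub_sub_cancel_left, inner_neg_right, real_inner_smul_right, real_inner_self_eq_norm_sq,
    norm_neg, norm_smul, Real.norm_of_nonneg (by positivity)] at h
  have : L / 2 * (1 / L * ‖∇ f y‖) ^ 2 - 1 / L * ‖∇ f y‖ ^ 2 = - (1 / (2 * L) * ‖∇ f y‖ ^ 2) := by
    field_simp; ring
  linarith

theorem nesterov_potential_step (hL : 0 < L) (hconv : ConvexOn ℝ univ f)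
    (hf : Differentiable ℝ f) (hlip : ∀ z w, ‖∇ f z - ∇ f w‖ ≤ L * ‖z - w‖)
    {θ ρ : ℝ} (hθ : 0 ≤ θ) (hρ : 0 ≤ ρ) (hθρ : θ ≤ 1 + ρ)
    {x y z xstar : E} (hzy : z - y = ρ • (y - x)) :
    θ * (1 + ρ) * (f (y - (1 / L) • ∇ f y) - f xstar)
        + L / 2 * ‖z - (1 / L * θ) • ∇ f y - xstar‖ ^ 2
      ≤ θ * ρ * (f x - f xstar) + L / 2 * ‖z - xstar‖ ^ 2 := by
  have hconv_le (w : E) : f y - f w ≤ ⟪∇ f y, y - w⟫ := by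
    have := hconv.inner_gradient_le_sub hf y w
    rw [← neg_sub, inner_neg_right] at this
    linarith
  have hsplit : ⟪∇ f y, z - xstar⟫ = ρ * ⟪∇ f y, y - x⟫ + ⟪∇ f y, y - xstar⟫ := by
    rw [← real_inner_smul_right, ← inner_add_right, ← hzy, sub_add_sub_cancel]
  have hexpand : L / 2 * ‖z - (1 / L * θ) • ∇ f y - xstar‖ ^ 2
      = L / 2 * ‖z - xstar‖ ^ 2 - θ * ⟪∇ f y, z - xstar⟫
        + θ ^ 2 * (1 / (2 * L) * ‖∇ f y‖ ^ 2) := by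
    rw [sub_right_comm, norm_sub_sq_real, real_inner_smul_right, real_inner_comm, norm_smul,
      Real.norm_eq_abs, mul_pow, sq_abs]
    field_simp
  have h1 := mul_le_mul_of_nonneg_left (apply_gradient_step_le hL hf hlip y)
    (mul_nonneg hθ (by linarith : 0 ≤ 1 + ρ))
  have h2 := mul_le_mul_of_nonneg_left (hconv_le x) (mul_nonneg hθ hρ)
  have h3 := mul_le_mul_of_nonneg_left (hconv_le xstar) hθ
  have h4 : θ ^ 2 * (1 / (2 * L) * ‖∇ f y‖ ^ 2) ≤ θ * (1 + ρ) * (1 / (2 * L) * ‖∇ f y‖ ^ 2) := by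
    rw [sq]; gcongr
  rw [hexpand, hsplit]
  linarith

theorem nesterov_potential_antitone (hL : 0 < L) (hconv : ConvexOn ℝ univ f)
    (hf : Differentiable ℝ f) (hlip : ∀ z w, ‖∇ f z - ∇ f w‖ ≤ L * ‖z - w‖)
    {xstar : E} (hmin : ∀ w, f xstar ≤ f w) {θ ρ : ℕ → ℝ} (hθ : ∀ t, 0 ≤ θ t)
    (hρ : ∀ t, 0 ≤ ρ t) (hθρ : ∀ t, θ t ≤ 1 + ρ t)
    (hθρ_succ : ∀ t, θ (t + 1) * ρ (t + 1) ≤ θ t * (1 + ρ t)) {x y z : ℕ → E}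
    (hx : ∀ t, x (t + 1) = y t - (1 / L) • ∇ f (y t))
    (hz : ∀ t, z (t + 1) = z t - (1 / L * θ t) • ∇ f (y t))
    (hzy : ∀ t, z t - y t = ρ t • (y t - x t)) :
    Antitone fun t => θ t * ρ t * (f (x t) - f xstar) + L / 2 * ‖z t - xstar‖ ^ 2 := by
  refine antitone_nat_of_succ_le fun t => ?_
  have hstep := nesterov_potential_step hL hconv hf hlip (xstar := xstar) (hθ t) (hρ t) (hθρ t)
    (hzy t)
  rw [← hx t, ← hz t] at hstep
  refine le_trans ?_ hstep
  gcongr ?_ + _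
  exact mul_le_mul_of_nonneg_right (hθρ_succ t) (sub_nonneg.2 (hmin _))

end SmoothConvex

theorem add_smul_momentum_succ {R V : Type*} [CommRing R] [AddCommGroup V] [Module R V]
    {α β γ c c' θ : R} {x m G : V} (hθ : θ = 1 + (1 - γ) * c') (hβ : θ * β = c - γ * c') :
    (x + β • m - α • G) + c' • (γ • m + (1 - γ) • ((x + β • m - α • G) - x))
      = x + c • m - (α * θ) • G := by
  subst hθ
  match_scalars
  · ring
  · linear_combination hβ
  · ring

namespace EmaNesterov

/- `theta u t = 1 + u c_{t+1}` and `rho u t = c_t / β_t - 1`, as rational functions of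
`u = 1 - γ` and `t`. -/
noncomputable def theta (u s : ℝ) : ℝ := (5 + 4 * u + u * s) / 4

noncomputable def rho (u s : ℝ) : ℝ :=
  (1 + 3 * u + u * s) * (5 + 4 * u + u * s) / (4 * u ^ 2 * (4 + s)) - 1

variable {u s : ℝ}

theorem one_le_theta (hu : 0 ≤ u) (hs : 0 ≤ s) : 1 ≤ theta u s := by
  unfold theta; nlinarith [mul_nonneg hu hs]

theorem one_add_rho_sub_theta (hu : 0 < u) (hs : 0 ≤ s) :
    1 + rho u s - theta u s = theta u s * ((1 - u) * (1 + 4 * u + u * s)) / (u ^ 2 * (4 + s)) := by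
  unfold theta rho
  field_simp
  ring

theorem theta_le_one_add_rho (hu : 0 < u) (hu1 : u ≤ 1) (hs : 0 ≤ s) :
    theta u s ≤ 1 + rho u s := by
  rw [← sub_nonneg, one_add_rho_sub_theta hu hs]
  have := one_le_theta hu.le hs
  have : 0 ≤ 1 - u := by linarith
  positivity

theorem rho_nonneg (hu : 0 < u) (hu1 : u ≤ 1) (hs : 0 ≤ s) : 0 ≤ rho u s := by
  linarith [one_le_theta hu.le hs, theta_le_one_add_rho hu hu1 hs]

theorem theta_mul_rho_succ_le (hu : 0 < u) (hu1 : u ≤ 1) (hs : 0 ≤ s) :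
    theta u (s + 1) * rho u (s + 1) ≤ theta u s * (1 + rho u s) := by
  have key : theta u s * (1 + rho u s) - theta u (s + 1) * rho u (s + 1)
      = (25 * (1 - u) + 9 * u ^ 2 * (4 + s) + 9 * u ^ 2 * (4 + s) ^ 2 + 6 * u ^ 3 * (4 + s) ^ 2
          + 2 * u ^ 3 * (4 + s) ^ 3 + 4 * u ^ 3 * (4 + s)) / (16 * u ^ 2 * (4 + s) * (5 + s)) := by
    unfold theta rho
    field_simp
    ring
  rw [← sub_nonneg, key]
  have : 0 ≤ 1 - u := by linarith
  positivity

theorem theta_mul_rho_eq (hu : 0 < u) (hs : 0 ≤ s) :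
    theta u s * rho u s = (5 + 4 * u + u * s)
      * ((1 + 3 * u + u * s) * (5 + 4 * u + u * s) - 4 * u ^ 2 * (4 + s)) / (16 * u ^ 2 * (4 + s)) := by
  unfold theta rho
  field_simp
  ring

theorem le_theta_mul_rho (hu : 0 < u) (hu1 : u ≤ 1) (hs : 0 ≤ s) :
    u * s ^ 2 / 16 ≤ theta u s * rho u s := by
  have hus : 0 ≤ u * s := mul_nonneg hu.le hs
  have hgap : u * (4 + s) * (u * s) ≤
      (1 + 3 * u + u * s) * (5 + 4 * u + u * s) - 4 * u ^ 2 * (4 + s) := by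
    nlinarith [mul_nonneg (mul_nonneg hu.le (by linarith : (0:ℝ) ≤ 4 + s)) (by linarith : 0 ≤ 1 - u)]
  rw [theta_mul_rho_eq hu hs]
  calc u * s ^ 2 / 16 = (u * s) * (u * (4 + s) * (u * s)) / (16 * u ^ 2 * (4 + s)) := by
        field_simp
    _ ≤ _ := by gcongr; nlinarith

theorem theta_mul_rho_zero_add_one_le (hu : 0 < u) (hu1 : u ≤ 1) :
    16 * u ^ 2 * (theta u 0 * rho u 0 + 1) ≤ 97 := by
  have h : 16 * u ^ 2 * (theta u 0 * rho u 0 + 1) = (25 + 115 * u + 120 * u ^ 2 - 16 * u ^ 3) / 4 := by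
    unfold theta rho
    field_simp
    ring
  rw [h]
  nlinarith [pow_pos hu 2, pow_pos hu 3]

variable {γ : ℝ} {c β : ℕ → ℝ}

theorem coeff_eq (hγ1 : γ < 1) (hc : ∀ t : ℕ, c t = 1 + γ / (4 * (1 - γ)) + (t : ℝ) / 4)
    (t : ℕ) : c t = (1 + 3 * (1 - γ) + (1 - γ) * t) / (4 * (1 - γ)) := by
  have : 1 - γ ≠ 0 := by linarith
  rw [hc]
  field_simp
  ring

theorem one_add_mul_coeff_succ (hγ1 : γ < 1)
    (hc : ∀ t : ℕ, c t = 1 + γ / (4 * (1 - γ)) + (t : ℝ) / 4) (t : ℕ) :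
    1 + (1 - γ) * c (t + 1) = theta (1 - γ) t := by
  have : 1 - γ ≠ 0 := by linarith
  rw [coeff_eq hγ1 hc, theta]
  field_simp
  push_cast
  ring

theorem theta_mul_beta_eq (hγ1 : γ < 1)
    (hc : ∀ t : ℕ, c t = 1 + γ / (4 * (1 - γ)) + (t : ℝ) / 4)
    (hβ : ∀ t : ℕ, β t = (c t - γ * c (t + 1)) / (1 + (1 - γ) * c (t + 1))) (t : ℕ) :
    theta (1 - γ) t * β t = c t - γ * c (t + 1) := by
  have hθ := one_le_theta (u := 1 - γ) (by linarith) t.cast_nonneg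
  rw [hβ, one_add_mul_coeff_succ hγ1 hc, mul_div_cancel₀ _ (by positivity)]

theorem coeff_eq_one_add_rho_mul_beta (hγ1 : γ < 1)
    (hc : ∀ t : ℕ, c t = 1 + γ / (4 * (1 - γ)) + (t : ℝ) / 4)
    (hβ : ∀ t : ℕ, β t = (c t - γ * c (t + 1)) / (1 + (1 - γ) * c (t + 1))) (t : ℕ) :
    c t = (1 + rho (1 - γ) t) * β t := by
  have hu : 0 < 1 - γ := by linarith
  have hθ : 0 < 5 + 4 * (1 - γ) + (1 - γ) * t := by positivity
  rw [hβ, one_add_mul_coeff_succ hγ1 hc, coeff_eq hγ1 hc, coeff_eq hγ1 hc, theta, rho]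
  field_simp
  push_cast
  ring

end EmaNesterov

open EmaNesterov in
/-- `O(1/T²)` convergence of EMA-Nesterov with gradient-descent base step
for convex `L`-smooth objectives. -/
theorem ema_nesterov_convex_rate
    (d : ℕ) (f : EuclideanSpace ℝ (Fin d) → ℝ)
    (L : ℝ) (hL : 0 < L)
    (hdiff : Differentiable ℝ f)
    (hconv : ConvexOn ℝ Set.univ f)
    (hlip : ∀ z w, ‖gradient f z - gradient f w‖ ≤ L * ‖z - w‖)
    (xstar : EuclideanSpace ℝ (Fin d)) (hmin : ∀ z, f xstar ≤ f z)
    (γ : ℝ) (hγ0 : 0 ≤ γ) (hγ1 : γ < 1)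
    (α : ℝ) (hα : α = 1 / L)
    (c β : ℕ → ℝ)
    (hc : ∀ t : ℕ, c t = 1 + γ / (4 * (1 - γ)) + (t : ℝ) / 4)
    (hβ : ∀ t : ℕ, β t = (c t - γ * c (t + 1)) / (1 + (1 - γ) * c (t + 1)))
    (x m : ℕ → EuclideanSpace ℝ (Fin d))
    (hm0 : m 0 = 0)
    (hx : ∀ t, x (t + 1) = (x t + β t • m t) - α • gradient f (x t + β t • m t))
    (hm : ∀ t, m (t + 1) = γ • m t + (1 - γ) • (x (t + 1) - x t)) :
    ∀ T : ℕ, 1 ≤ T → f (x T) - f xstar ≤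
      97 * L / (2 * (1 - γ) ^ 3 * (T : ℝ) ^ 2) * ‖x 0 - xstar‖ ^ 2 := by
  intro T hT
  subst hα
  have hu : 0 < 1 - γ := by linarith
  have hu1 : 1 - γ ≤ 1 := by linarith
  set y : ℕ → EuclideanSpace ℝ (Fin d) := fun t => x t + β t • m t
  set z : ℕ → EuclideanSpace ℝ (Fin d) := fun t => x t + c t • m t
  have hz (t : ℕ) : z (t + 1) = z t - (1 / L * theta (1 - γ) t) • ∇ f (y t) := by
    simp only [z, y]
    rw [hm t, hx t]
    exact add_smul_momentum_succ (one_add_mul_coeff_succ hγ1 hc t).symm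
      (theta_mul_beta_eq hγ1 hc hβ t)
  have hzy (t : ℕ) : z t - y t = rho (1 - γ) t • (y t - x t) := by
    simp only [z, y]
    rw [coeff_eq_one_add_rho_mul_beta hγ1 hc hβ t]
    module
  have hpot := nesterov_potential_antitone hL hconv hdiff hlip hmin (xstar := xstar)
    (fun t => zero_le_one.trans (one_le_theta hu.le t.cast_nonneg))
    (fun t => rho_nonneg hu hu1 t.cast_nonneg) (fun t => theta_le_one_add_rho hu hu1 t.cast_nonneg)
    (fun t => by push_cast; exact theta_mul_rho_succ_le hu hu1 t.cast_nonneg) hx hz hzy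
    (Nat.zero_le T)
  simp only [z, hm0, smul_zero, add_zero, Nat.cast_zero] at hpot
  have hzT : 0 ≤ L / 2 * ‖x T + c T • m T - xstar‖ ^ 2 := by positivity
  have hx0 := mul_le_mul_of_nonneg_left (sub_le_sq_of_isMin hdiff hlip hmin (x 0))
    (mul_nonneg (zero_le_one.trans (one_le_theta hu.le le_rfl)) (rho_nonneg hu hu1 le_rfl))
  have hxT := mul_le_mul_of_nonneg_right (le_theta_mul_rho hu hu1 T.cast_nonneg)
    (sub_nonneg.2 (hmin (x T)))
  have hchain : (1 - γ) * T ^ 2 * (f (x T) - f xstar)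
      ≤ 16 * (theta (1 - γ) 0 * rho (1 - γ) 0 + 1) * (L / 2 * ‖x 0 - xstar‖ ^ 2) := by
    linarith
  have h97 := mul_le_mul_of_nonneg_right (theta_mul_rho_zero_add_one_le hu hu1)
    (by positivity : 0 ≤ L / 2 * ‖x 0 - xstar‖ ^ 2)
  have hT' : (0 : ℝ) < T := by exact_mod_cast hT
  rw [div_mul_eq_mul_div, le_div_iff₀ (by positivity)]
  linarith [mul_le_mul_of_nonneg_left hchain (sq_nonneg (1 - γ))]
end

section
/- Let μ > 0, L > μ, γ ∈ [0, 1 - μ/L), α = 1/L, r = √(αμ(1-γ)), c = (1-γ-r)/((1-γ)r), and β = (1-γ-r)²/((1-γ)(1-γ-r²)). Consider sequences in ℝ^d satisfying y^t = x^t + β m^t, x^{t+1} = y^t - α g^t, m^{t+1} = γ m^t + (1-γ)(x^{t+1} - x^t), and define v^t = x^t + c m^t. Then for every t, v^{t+1} = (1-r) v^t + r (y^t - (1/μ) g^t). -/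
/-! Substituting the update rules, both sides of the recursion are linear combinations of
`x^t`, `m^t` and `g^t` with coefficient `1` on `x^t`. Since `c (1-γ) = (1-γ-r)/r`, the
coefficient of `g^t` on the left is `α(1-γ)/r`, which equals `r/μ` exactly because
`r² = αμ(1-γ)`; the coefficients of `m^t` agree by the choice of `β` and `c`, provided
`1-γ-r² ≠ 0`, which holds as `r² = (μ/L)(1-γ) < 1-γ`. -/

section OneStep

variable {K E : Type*} [Field K] [AddCommGroup E] [Module K E]

theorem ema_nesterov_v_step {μ γ α r c β : K} {x x' m m' y g : E}
    (hμ : μ ≠ 0) (hr : r ≠ 0) (hγ : 1 - γ ≠ 0) (hden : 1 - γ - r ^ 2 ≠ 0)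
    (hr2 : r ^ 2 = α * μ * (1 - γ))
    (hc : c = (1 - γ - r) / ((1 - γ) * r))
    (hβ : β = (1 - γ - r) ^ 2 / ((1 - γ) * (1 - γ - r ^ 2)))
    (hy : y = x + β • m) (hx : x' = y - α • g) (hm : m' = γ • m + (1 - γ) • (x' - x)) :
    x' + c • m' = (1 - r) • (x + c • m) + r • (y - (1 / μ) • g) := by
  subst hm hx hy
  match_scalars
  · ring
  · rw [hc, hβ]; field_simp; ring
  · rw [hc]; field_simp; linear_combination hr2

end OneStep

theorem ema_nesterov_params_bounds {μ L γ α r : ℝ}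
    (hμ : 0 < μ) (hL : μ < L) (hγ : γ < 1 - μ / L)
    (hα : α = 1 / L) (hr : r = Real.sqrt (α * μ * (1 - γ))) :
    0 < 1 - γ ∧ 0 < r ∧ r ^ 2 = α * μ * (1 - γ) ∧ r ^ 2 < 1 - γ := by
  have hL0 : 0 < L := hμ.trans hL
  have hαμ : α * μ = μ / L := by rw [hα]; ring
  have hαμ1 : α * μ < 1 := by rw [hαμ, div_lt_one hL0]; exact hL
  have h1γ : 0 < 1 - γ := by linarith [div_pos hμ hL0]
  have hpos : 0 < α * μ * (1 - γ) := mul_pos (by rw [hαμ]; positivity) h1γ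
  have hr2 : r ^ 2 = α * μ * (1 - γ) := by rw [hr, Real.sq_sqrt hpos.le]
  refine ⟨h1γ, ?_, hr2, ?_⟩
  · rw [hr]; exact Real.sqrt_pos.mpr hpos
  · rw [hr2]; nlinarith

theorem ema_nesterov_v_recursion_strongly_convex_general
    (d : ℕ) (μ L γ α r c β : ℝ)
    (hμ : 0 < μ) (hL : μ < L) (hγ1 : γ < 1 - μ / L)
    (hα : α = 1 / L)
    (hr : r = Real.sqrt (α * μ * (1 - γ)))
    (hc : c = (1 - γ - r) / ((1 - γ) * r))
    (hβ : β = (1 - γ - r) ^ 2 / ((1 - γ) * (1 - γ - r ^ 2)))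
    (x m y g : ℕ → EuclideanSpace ℝ (Fin d))
    (hy : ∀ t, y t = x t + β • m t)
    (hx : ∀ t, x (t + 1) = y t - α • g t)
    (hm : ∀ t, m (t + 1) = γ • m t + (1 - γ) • (x (t + 1) - x t)) :
    ∀ t, x (t + 1) + c • m (t + 1) =
      (1 - r) • (x t + c • m t) + r • (y t - (1 / μ) • g t) := by
  obtain ⟨h1γ, hr0, hr2, hr2lt⟩ := ema_nesterov_params_bounds hμ hL hγ1 hα hr
  intro t
  exact ema_nesterov_v_step hμ.ne' hr0.ne' h1γ.ne' (sub_pos.mpr hr2lt).ne' hr2 hc hβ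
    (hy t) (hx t) (hm t)

/-- the auxiliary sequence `v^t = x^t + c m^t` of EMA-Nesterov (strongly
convex parameter choice) satisfies `v^{t+1} = (1-r) v^t + r (y^t - (1/μ) g^t)`. -/
theorem ema_nesterov_v_recursion_strongly_convex
    (d : ℕ) (μ L γ α r c β : ℝ)
    (hμ : 0 < μ) (hL : μ < L) (hγ0 : 0 ≤ γ) (hγ1 : γ < 1 - μ / L)
    (hα : α = 1 / L)
    (hr : r = Real.sqrt (α * μ * (1 - γ)))
    (hc : c = (1 - γ - r) / ((1 - γ) * r))
    (hβ : β = (1 - γ - r) ^ 2 / ((1 - γ) * (1 - γ - r ^ 2)))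
    (x m y g : ℕ → EuclideanSpace ℝ (Fin d))
    (hy : ∀ t, y t = x t + β • m t)
    (hx : ∀ t, x (t + 1) = y t - α • g t)
    (hm : ∀ t, m (t + 1) = γ • m t + (1 - γ) • (x (t + 1) - x t)) :
    ∀ t, x (t + 1) + c • m (t + 1) =
      (1 - r) • (x t + c • m t) + r • (y t - (1 / μ) • g t) :=
  ema_nesterov_v_recursion_strongly_convex_general d μ L γ α r c β hμ hL hγ1 hα hr hc hβ x m y g hy
    hx hm
end

section
/- Let f : ℝ^d → ℝ be μ-strongly convex with L-Lipschitz gradient, μ > 0, κ = L/μ, and minimizer x*. Fix γ ∈ [0, 1 - 1/κ), set α = 1/L, r = √((1-γ)/κ), c = (1-γ-r)/((1-γ)r), β = (1-γ-r)²/((1-γ)(1-γ-r²)). Run EMA-Nesterov with gradient-descent base step and constant β_t = β, and define the Lyapunov function E_t = f(x^t) - f(x*) + (μ/2)‖x^t + c·m^t - x*‖². Then for every t ≥ 0, E_{t+1} ≤ (1 - r) E_t. -/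
/-!
With `y = x + β m`, `g = ∇f(y)` and `w = y - x⋆ - g / μ`, the choice of `c` and `β` makes the new
Lyapunov point an exact convex combination: `x' + c m' - x⋆ = (1 - r)(x + c m - x⋆) + r w`.
Expanding the squared norm of this combination and bounding `f(x')` by the descent lemma at `y`
and `f(x⋆)`, `f(x)` from below by strong convexity at `y`, what remains is a quadratic form in
`(g, m)` whose coefficients come from `L r² = (1 - γ) μ`; its discriminant is
`γ (1 - r) r (1 - γ - r)³ / ((1 - γ - r²)(1 - γ)³) ≥ 0`, so it is nonpositive.
-/

open Set AffineMap InnerProductSpace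
open scoped RealInnerProductSpace

variable {E : Type*} [NormedAddCommGroup E] [InnerProductSpace ℝ E]

theorem norm_one_sub_smul_add_smul_sq (r : ℝ) (u w : E) :
    ‖(1 - r) • u + r • w‖ ^ 2 = (1 - r) * ‖u‖ ^ 2 + r * ‖w‖ ^ 2 - r * (1 - r) * ‖u - w‖ ^ 2 := by
  rw [norm_add_sq_real, norm_sub_sq_real, real_inner_smul_left, real_inner_smul_right,
    norm_smul, norm_smul, mul_pow, mul_pow, Real.norm_eq_abs, Real.norm_eq_abs, sq_abs, sq_abs]
  ring

theorem mul_inner_le_add_of_sq_le_four_mul {A P Q : ℝ} (hP : 0 ≤ P) (hQ : 0 ≤ Q)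
    (hA : A ^ 2 ≤ 4 * P * Q) (u v : E) : A * ⟪u, v⟫ ≤ P * ‖u‖ ^ 2 + Q * ‖v‖ ^ 2 := by
  rcases hP.eq_or_lt with rfl | hP
  · have hA : A = 0 := by nlinarith
    rw [hA, zero_mul, zero_mul, zero_add]
    positivity
  · have hsq : ‖(2 * P) • u - A • v‖ ^ 2
        = 4 * P ^ 2 * ‖u‖ ^ 2 - 4 * P * A * ⟪u, v⟫ + A ^ 2 * ‖v‖ ^ 2 := by
      rw [norm_sub_sq_real, real_inner_smul_left, real_inner_smul_right, norm_smul, norm_smul,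
        mul_pow, mul_pow, Real.norm_eq_abs, Real.norm_eq_abs, sq_abs, sq_abs]
      ring
    have := sq_nonneg ‖(2 * P) • u - A • v‖
    nlinarith [mul_le_mul_of_nonneg_right hA (sq_nonneg ‖v‖)]

variable {μ L γ r c β : ℝ}

theorem ema_nesterov_residual_nonpos (hμ : 0 < μ) (hγ : 0 ≤ γ) (hr : 0 < r) (hrγ : r < 1 - γ)
    (hL : L * r ^ 2 = (1 - γ) * μ) (hc : c = (1 - γ - r) / ((1 - γ) * r))
    (hβ : β = (1 - γ - r) ^ 2 / ((1 - γ) * (1 - γ - r ^ 2))) (g m : E) :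
    (r ^ 2 / μ - 1 / L) / 2 * ‖g‖ ^ 2 + (1 - r) * (β - r * (c - β)) * ⟪g, m⟫
      - μ * (1 - r) / 2 * (β ^ 2 + r * (c - β) ^ 2) * ‖m‖ ^ 2 ≤ 0 := by
  have hs : 0 < 1 - γ := hr.trans hrγ
  have hr1 : 0 ≤ 1 - r := by linarith
  have hsr2 : 0 < 1 - γ - r ^ 2 := by nlinarith
  have hLval : L = (1 - γ) * μ / r ^ 2 := by rw [eq_div_iff (by positivity)]; exact hL
  have hL0 : 0 < L := by rw [hLval]; positivity
  have hdisc : ((1 - r) * (β - r * (c - β))) ^ 2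
      ≤ 4 * (γ / (2 * L)) * (μ * (1 - r) / 2 * (β ^ 2 + r * (c - β) ^ 2)) := by
    have hgap : 4 * (γ / (2 * L)) * (μ * (1 - r) / 2 * (β ^ 2 + r * (c - β) ^ 2))
        - ((1 - r) * (β - r * (c - β))) ^ 2
        = γ * (1 - r) * r * (1 - γ - r) ^ 3 / ((1 - γ - r ^ 2) * (1 - γ) ^ 3) := by
      rw [hc, hβ, hLval]
      field_simp
      ring
    have : 0 ≤ γ * (1 - r) * r * (1 - γ - r) ^ 3 / ((1 - γ - r ^ 2) * (1 - γ) ^ 3) := by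
      have : 0 ≤ 1 - γ - r := by linarith
      positivity
    linarith
  have hbound := mul_inner_le_add_of_sq_le_four_mul (by positivity) (by positivity) hdisc g m
  have hcoeff : (r ^ 2 / μ - 1 / L) / 2 = -(γ / (2 * L)) := by
    rw [hLval]; field_simp; ring
  rw [hcoeff]
  linarith

variable [CompleteSpace E]

theorem HasGradientAt.hasDerivAt_comp_lineMap {f : E → ℝ} {f' p q : E} {t : ℝ}
    (hf : HasGradientAt f f' (lineMap p q t)) :
    HasDerivAt (fun s ↦ f (lineMap p q s)) ⟪f', q - p⟫ t := by
  have h := (hasGradientAt_iff_hasFDerivAt.mp hf).comp_hasDerivAt t hasDerivAt_lineMap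
  simp only [toDual_apply_apply] at h
  exact h

theorem StrongConvexOn.le_of_hasGradientAt {f : E → ℝ} {μ : ℝ} {f' p : E}
    (hf : StrongConvexOn univ μ f) (hp : HasGradientAt f f' p) (q : E) :
    f p + ⟪f', q - p⟫ + μ / 2 * ‖q - p‖ ^ 2 ≤ f q := by
  have hconv := (strongConvexOn_iff_convex.mp hf).comp_affineMap (lineMap p q)
  have hderiv : HasDerivAt (fun t : ℝ ↦ f (lineMap p q t) - μ / 2 * ‖lineMap p q t‖ ^ 2)
      (⟪f', q - p⟫ - μ / 2 * (2 * ⟪p, q - p⟫)) 0 := by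
    refine (HasGradientAt.hasDerivAt_comp_lineMap (q := q) (t := 0)
      (by rwa [lineMap_apply_zero])).sub ?_
    simpa using (hasDerivAt_lineMap (𝕜 := ℝ) (a := p) (b := q) (x := 0)).norm_sq.const_mul (μ / 2)
  have hslope := hconv.le_slope_of_hasDerivAt (mem_univ 0) (mem_univ 1) one_pos hderiv
  rw [slope_def_field] at hslope
  simp only [Function.comp_apply, lineMap_apply_zero, lineMap_apply_one, sub_zero, div_one,
    inner_sub_right, real_inner_self_eq_norm_sq] at hslope
  rw [norm_sub_sq_real, inner_sub_right, real_inner_comm p q]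
  linarith

theorem le_add_inner_gradient_add_of_lipschitz {f : E → ℝ} {L : ℝ} (hf : Differentiable ℝ f)
    (hlip : ∀ z w, ‖gradient f z - gradient f w‖ ≤ L * ‖z - w‖) (p q : E) :
    f q ≤ f p + ⟪gradient f p, q - p⟫ + L / 2 * ‖q - p‖ ^ 2 := by
  set v := q - p
  have hderiv (t : ℝ) : HasDerivAt
      (fun s ↦ f (lineMap p q s) - s * ⟪gradient f p, v⟫ - L / 2 * s ^ 2 * ‖v‖ ^ 2)
      (⟪gradient f (lineMap p q t), v⟫ - ⟪gradient f p, v⟫ - L * t * ‖v‖ ^ 2) t := by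
    have h := (((hf (lineMap p q t)).hasGradientAt.hasDerivAt_comp_lineMap).sub
      ((hasDerivAt_id t).mul_const ⟪gradient f p, v⟫)).sub
      (((hasDerivAt_pow 2 t).const_mul (L / 2)).mul_const (‖v‖ ^ 2))
    exact h.congr_deriv (by simp only [v]; push_cast; ring)
  obtain ⟨ξ, hξ, hξeq⟩ := exists_hasDerivAt_eq_slope _ _ zero_lt_one
    (fun t _ ↦ (hderiv t).continuousAt.continuousWithinAt) (fun t _ ↦ hderiv t)
  have hbound : ⟪gradient f (lineMap p q ξ) - gradient f p, v⟫ ≤ L * ξ * ‖v‖ ^ 2 := by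
    calc _ ≤ ‖gradient f (lineMap p q ξ) - gradient f p‖ * ‖v‖ := real_inner_le_norm _ _
      _ ≤ L * ‖lineMap p q ξ - p‖ * ‖v‖ := by gcongr; exact hlip _ _
      _ = L * ξ * ‖v‖ ^ 2 := by
        rw [lineMap_apply_module', add_sub_cancel_right, norm_smul, Real.norm_of_nonneg hξ.1.le]
        ring
  simp only [lineMap_apply_zero, lineMap_apply_one] at hξeq
  rw [inner_sub_left] at hbound
  simp only [one_mul, one_pow, mul_one, zero_mul, sub_zero, ne_eq, OfNat.ofNat_ne_zero,
    not_false_eq_true, zero_pow, mul_zero, div_one] at hξeq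
  linarith

noncomputable def emaLyapunov (f : E → ℝ) (μ c : ℝ) (xstar x m : E) : ℝ :=
  f x - f xstar + μ / 2 * ‖x + c • m - xstar‖ ^ 2

theorem emaLyapunov_step_le {f : E → ℝ} (hf : Differentiable ℝ f)
    (hsc : StrongConvexOn univ μ f)
    (hlip : ∀ z w, ‖gradient f z - gradient f w‖ ≤ L * ‖z - w‖)
    (hμ : 0 < μ) (hγ : 0 ≤ γ) (hr : 0 < r) (hrγ : r < 1 - γ)
    (hL : L * r ^ 2 = (1 - γ) * μ) (hc : c = (1 - γ - r) / ((1 - γ) * r))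
    (hβ : β = (1 - γ - r) ^ 2 / ((1 - γ) * (1 - γ - r ^ 2))) {xstar x m x' m' : E}
    (hx' : x' = (x + β • m) - (1 / L) • gradient f (x + β • m))
    (hm' : m' = γ • m + (1 - γ) • (x' - x)) :
    emaLyapunov f μ c xstar x' m' ≤ (1 - r) * emaLyapunov f μ c xstar x m := by
  set y := x + β • m
  set g := gradient f y with hg
  have hs : 0 < 1 - γ := hr.trans hrγ
  have hr1 : 0 ≤ 1 - r := by linarith
  have hsr2 : 0 < 1 - γ - r ^ 2 := by nlinarith
  have hLval : L = (1 - γ) * μ / r ^ 2 := by rw [eq_div_iff (by positivity)]; exact hL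
  have hsplit :
      x' + c • m' - xstar = (1 - r) • (x + c • m - xstar) + r • (y - xstar - μ⁻¹ • g) := by
    rw [hm', hx']
    match_scalars
    · ring
    · rw [hc, hβ]; field_simp; ring
    · rw [hc, hLval]; field_simp; ring
    · ring
  have hdiff : (x + c • m - xstar) - (y - xstar - μ⁻¹ • g) = (c - β) • m + μ⁻¹ • g := by
    module
  have hdesc : f x' ≤ f y - 1 / (2 * L) * ‖g‖ ^ 2 := by
    have h := le_add_inner_gradient_add_of_lipschitz hf hlip y x'
    rw [← hg, show x' - y = -(1 / L) • g by rw [hx']; module, real_inner_smul_right, norm_smul,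
      Real.norm_eq_abs, mul_pow, sq_abs, real_inner_self_eq_norm_sq] at h
    have hcoeff : -(1 / L) + L / 2 * (-(1 / L)) ^ 2 = -(1 / (2 * L)) := by field_simp; ring
    linear_combination h + ‖g‖ ^ 2 * hcoeff
  have hstar := hsc.le_of_hasGradientAt (hf y).hasGradientAt xstar
  have hx := hsc.le_of_hasGradientAt (hf y).hasGradientAt x
  rw [show x - y = -β • m by module, real_inner_smul_right, norm_smul, Real.norm_eq_abs, mul_pow,
    sq_abs] at hx
  rw [show xstar - y = -(y - xstar) by abel, inner_neg_right, norm_neg] at hstar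
  have hres := ema_nesterov_residual_nonpos hμ hγ hr hrγ hL hc hβ g m
  have hw : ‖y - xstar - μ⁻¹ • g‖ ^ 2
      = ‖y - xstar‖ ^ 2 - 2 * μ⁻¹ * ⟪g, y - xstar⟫ + μ⁻¹ ^ 2 * ‖g‖ ^ 2 := by
    rw [norm_sub_sq_real, real_inner_smul_right, norm_smul, Real.norm_eq_abs, mul_pow, sq_abs,
      real_inner_comm]
    ring
  have hd : ‖(c - β) • m + μ⁻¹ • g‖ ^ 2
      = (c - β) ^ 2 * ‖m‖ ^ 2 + 2 * (c - β) * μ⁻¹ * ⟪g, m⟫ + μ⁻¹ ^ 2 * ‖g‖ ^ 2 := by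
    rw [norm_add_sq_real, real_inner_smul_left, real_inner_smul_right, norm_smul, norm_smul,
      Real.norm_eq_abs, Real.norm_eq_abs, mul_pow, mul_pow, sq_abs, sq_abs, real_inner_comm]
    ring
  have hμinv : μ * μ⁻¹ = 1 := mul_inv_cancel₀ hμ.ne'
  unfold emaLyapunov
  rw [hsplit, norm_one_sub_smul_add_smul_sq, hdiff, hw, hd]
  linear_combination hdesc + mul_le_mul_of_nonneg_left hstar hr.le
    + mul_le_mul_of_nonneg_left hx hr1 + hres
    + (r ^ 2 * μ⁻¹ / 2 * ‖g‖ ^ 2 - r * ⟪g, y - xstar⟫ - r * (1 - r) * (c - β) * ⟪g, m⟫) * hμinv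

theorem ema_nesterov_lyapunov_decrease_strongly_convex_general
    (d : ℕ) (f : EuclideanSpace ℝ (Fin d) → ℝ)
    (μ L : ℝ) (hμ : 0 < μ) (hL : μ < L)
    (hdiff : Differentiable ℝ f)
    (hsc : ConvexOn ℝ Set.univ fun z => f z - μ / 2 * ‖z‖ ^ 2)
    (hlip : ∀ z w, ‖gradient f z - gradient f w‖ ≤ L * ‖z - w‖)
    (xstar : EuclideanSpace ℝ (Fin d))
    (γ : ℝ) (hγ0 : 0 ≤ γ) (hγ1 : γ < 1 - 1 / (L / μ))
    (α r c β : ℝ)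
    (hα : α = 1 / L)
    (hr : r = Real.sqrt ((1 - γ) / (L / μ)))
    (hc : c = (1 - γ - r) / ((1 - γ) * r))
    (hβ : β = (1 - γ - r) ^ 2 / ((1 - γ) * (1 - γ - r ^ 2)))
    (x m : ℕ → EuclideanSpace ℝ (Fin d))
    (hx : ∀ t, x (t + 1) = (x t + β • m t) - α • gradient f (x t + β • m t))
    (hm : ∀ t, m (t + 1) = γ • m t + (1 - γ) • (x (t + 1) - x t)) :
    ∀ t : ℕ,
      f (x (t + 1)) - f xstar + μ / 2 * ‖x (t + 1) + c • m (t + 1) - xstar‖ ^ 2 ≤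
        (1 - r) * (f (x t) - f xstar + μ / 2 * ‖x t + c • m t - xstar‖ ^ 2) := by
  subst hα
  have hL0 : 0 < L := hμ.trans hL
  have hκ : μ < (1 - γ) * L := by
    rw [one_div_div] at hγ1
    have := (div_lt_iff₀ hL0).mp (lt_sub_comm.mp hγ1)
    linarith
  have hs : 0 < 1 - γ := pos_of_mul_pos_left (hμ.trans hκ) hL0.le
  have hrsq : L * r ^ 2 = (1 - γ) * μ := by
    rw [hr, Real.sq_sqrt (by positivity)]
    field_simp
  have hr0 : 0 < r := hr ▸ Real.sqrt_pos.2 (by positivity)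
  have hrγ : r < 1 - γ := lt_of_pow_lt_pow_left₀ 2 hs.le (by nlinarith)
  intro t
  exact emaLyapunov_step_le hdiff (strongConvexOn_iff_convex.mpr hsc) hlip hμ hγ0 hr0 hrγ hrsq
    hc hβ (hx t) (hm t)

/-- one-step Lyapunov decrease `E_{t+1} ≤ (1-r) E_t` for EMA-Nesterov with
gradient-descent base step on a `μ`-strongly convex, `L`-smooth objective. -/
theorem ema_nesterov_lyapunov_decrease_strongly_convex
    (d : ℕ) (f : EuclideanSpace ℝ (Fin d) → ℝ)
    (μ L : ℝ) (hμ : 0 < μ) (hL : μ < L)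
    (hdiff : Differentiable ℝ f)
    (hsc : ConvexOn ℝ Set.univ fun z => f z - μ / 2 * ‖z‖ ^ 2)
    (hlip : ∀ z w, ‖gradient f z - gradient f w‖ ≤ L * ‖z - w‖)
    (xstar : EuclideanSpace ℝ (Fin d)) (hmin : ∀ z, f xstar ≤ f z)
    (γ : ℝ) (hγ0 : 0 ≤ γ) (hγ1 : γ < 1 - 1 / (L / μ))
    (α r c β : ℝ)
    (hα : α = 1 / L)
    (hr : r = Real.sqrt ((1 - γ) / (L / μ)))
    (hc : c = (1 - γ - r) / ((1 - γ) * r))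
    (hβ : β = (1 - γ - r) ^ 2 / ((1 - γ) * (1 - γ - r ^ 2)))
    (x m : ℕ → EuclideanSpace ℝ (Fin d))
    (hm0 : m 0 = 0)
    (hx : ∀ t, x (t + 1) = (x t + β • m t) - α • gradient f (x t + β • m t))
    (hm : ∀ t, m (t + 1) = γ • m t + (1 - γ) • (x (t + 1) - x t)) :
    ∀ t : ℕ,
      f (x (t + 1)) - f xstar + μ / 2 * ‖x (t + 1) + c • m (t + 1) - xstar‖ ^ 2 ≤
        (1 - r) * (f (x t) - f xstar + μ / 2 * ‖x t + c • m t - xstar‖ ^ 2) :=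
  ema_nesterov_lyapunov_decrease_strongly_convex_general d f μ L hμ hL hdiff hsc hlip xstar γ hγ0
    hγ1 α r c β hα hr hc hβ x m hx hm
end

section
/- Fix γ ∈ [0,1), L > 0, and define c_t = 1 + γ/(4(1-γ)) + t/4 and β_t = (c_t - γ c_{t+1})/(1 + (1-γ) c_{t+1}). Consider sequences in ℝ^d satisfying y^t = x^t + β_t m^t, x^{t+1} = y^t - (1/L) g^t, m^{t+1} = γ m^t + (1-γ)(x^{t+1} - x^t), and set v^t = x^t + c_t m^t. Then for every t, v^{t+1} = v^t - η_t g^t, where η_t = (1 + (1-γ) c_{t+1})/L. -/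
/-- the auxiliary sequence `v^t = x^t + c_t m^t` of EMA-Nesterov (convex
parameter schedule) satisfies `v^{t+1} = v^t - η_t g^t`. -/
theorem ema_nesterov_v_recursion_convex
    (d : ℕ) (γ L : ℝ) (hγ0 : 0 ≤ γ) (hγ1 : γ < 1) (hL : 0 < L)
    (c β η : ℕ → ℝ)
    (hc : ∀ t : ℕ, c t = 1 + γ / (4 * (1 - γ)) + (t : ℝ) / 4)
    (hβ : ∀ t : ℕ, β t = (c t - γ * c (t + 1)) / (1 + (1 - γ) * c (t + 1)))
    (hη : ∀ t : ℕ, η t = (1 + (1 - γ) * c (t + 1)) / L)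
    (x m y g : ℕ → EuclideanSpace ℝ (Fin d))
    (hy : ∀ t, y t = x t + β t • m t)
    (hx : ∀ t, x (t + 1) = y t - (1 / L) • g t)
    (hm : ∀ t, m (t + 1) = γ • m t + (1 - γ) • (x (t + 1) - x t)) :
    ∀ t, x (t + 1) + c (t + 1) • m (t + 1) = (x t + c t • m t) - η t • g t := by
  intro t
  have hγ' : (0:ℝ) < 1 - γ := by linarith
  have hcpos : 0 ≤ c (t + 1) := by
    rw [hc]
    have h1 : 0 ≤ γ / (4 * (1 - γ)) := by positivity
    have h2 : 0 ≤ ((t:ℝ) + 1) / 4 := by positivity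
    push_cast
    linarith
  have hD : (0:ℝ) < 1 + (1 - γ) * c (t + 1) := by nlinarith
  have hDne : (1 + (1 - γ) * c (t + 1)) ≠ 0 := ne_of_gt hD
  have hLne : L ≠ 0 := ne_of_gt hL
  rw [hm, hx, hy, hη, hβ]
  ext i
  simp only [PiLp.add_apply, PiLp.sub_apply, PiLp.smul_apply, smul_eq_mul]
  field_simp
  ring
end

section
/- Fix γ ∈ [0,1), define c_t = 1 + γ/(4(1-γ)) + t/4, q_t = 1 + (1-γ) c_{t+1}, and for t ≥ 0 define a_{t+1} = c_t q_t² / (c_t - γ c_{t+1}). Then for every integer t ≥ 1, with s_t = 1 + t/4, the identity a_t - (a_{t+1} - q_t) = [8(1-γ)³ s_t (16 s_t² - 1) + 36(1-γ)² s_t (4 s_t - 1) + 25γ] / [64(1-γ)² s_t (4 s_t - 1)] holds, and consequently a_{t+1} - q_t ≤ a_t. -/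
set_option maxHeartbeats 1000000


/-- for `t ≥ 1`, the identity for `a_t - (a_{t+1} - q_t)` in terms of
`s_t = 1 + t/4`, and the consequence `a_{t+1} - q_t ≤ a t`. -/
theorem a_seq_decrease
    (γ : ℝ) (hγ0 : 0 ≤ γ) (hγ1 : γ < 1)
    (c q a : ℕ → ℝ)
    (hc : ∀ t : ℕ, c t = 1 + γ / (4 * (1 - γ)) + (t : ℝ) / 4)
    (hq : ∀ t : ℕ, q t = 1 + (1 - γ) * c (t + 1))
    (ha : ∀ t : ℕ, a (t + 1) = c t * q t ^ 2 / (c t - γ * c (t + 1))) :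
    ∀ t : ℕ, 1 ≤ t →
      a t - (a (t + 1) - q t) =
        (8 * (1 - γ) ^ 3 * (1 + (t : ℝ) / 4) * (16 * (1 + (t : ℝ) / 4) ^ 2 - 1)
          + 36 * (1 - γ) ^ 2 * (1 + (t : ℝ) / 4) * (4 * (1 + (t : ℝ) / 4) - 1)
          + 25 * γ) /
        (64 * (1 - γ) ^ 2 * (1 + (t : ℝ) / 4) * (4 * (1 + (t : ℝ) / 4) - 1)) ∧
      a (t + 1) - q t ≤ a t := by
  intro t ht
  obtain ⟨k, rfl⟩ : ∃ k, t = k + 1 := ⟨t - 1, by omega⟩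
  have hg : (0:ℝ) < 1 - γ := by linarith
  have hk0 : (0:ℝ) ≤ (k:ℝ) := Nat.cast_nonneg k
  -- denominators
  have hden1 : c k - γ * c (k + 1) = (1 - γ) * (1 + (k:ℝ)/4) := by
    rw [hc, hc]; push_cast; field_simp; ring
  have hden2 : c (k+1) - γ * c (k + 2) = (1 - γ) * (1 + ((k:ℝ)+1)/4) := by
    rw [hc, hc]; push_cast; field_simp; ring
  have hd1 : c k - γ * c (k + 1) ≠ 0 := by rw [hden1]; positivity
  have hd2 : c (k+1) - γ * c (k + 2) ≠ 0 := by rw [hden2]; positivity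
  have key : a (k+1) - (a (k + 1 + 1) - q (k+1)) =
        (8 * (1 - γ) ^ 3 * (1 + ((k:ℝ)+1) / 4) * (16 * (1 + ((k:ℝ)+1) / 4) ^ 2 - 1)
          + 36 * (1 - γ) ^ 2 * (1 + ((k:ℝ)+1) / 4) * (4 * (1 + ((k:ℝ)+1) / 4) - 1)
          + 25 * γ) /
        (64 * (1 - γ) ^ 2 * (1 + ((k:ℝ)+1) / 4) * (4 * (1 + ((k:ℝ)+1) / 4) - 1)) := by
    have hne : (1:ℝ) - γ ≠ 0 := ne_of_gt hg
    have hk4 : (4:ℝ) + (k:ℝ) ≠ 0 := by positivity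
    have hk5 : (5:ℝ) + (k:ℝ) ≠ 0 := by positivity
    have eQ : q (k+1) = (4 + (6 + (k:ℝ)) * (1 - γ) + γ) / 4 := by
      rw [hq (k+1), hc (k+2)]; push_cast; field_simp; ring
    have hq1 : (0:ℝ) < (1 - γ) * (1 + (k:ℝ)/4) := by positivity
    have hq2 : (0:ℝ) < (1 - γ) * (1 + ((k:ℝ)+1)/4) := by positivity
    have eA1 : a (k+1) =
        ((4 + (k:ℝ)) * (1 - γ) + γ) * (4 + (5 + (k:ℝ)) * (1 - γ) + γ) ^ 2
          / (16 * (1 - γ) ^ 2 * (4 + (k:ℝ))) := by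
      rw [ha k, hden1, hq k, hc k, hc (k+1)]
      push_cast; rw [div_eq_div_iff hq1.ne' (by positivity)]
      field_simp; ring
    have eA2 : a (k+1+1) =
        ((5 + (k:ℝ)) * (1 - γ) + γ) * (4 + (6 + (k:ℝ)) * (1 - γ) + γ) ^ 2
          / (16 * (1 - γ) ^ 2 * (5 + (k:ℝ))) := by
      have e2 : (k:ℕ) + 1 + 1 = k + 2 := rfl
      rw [e2] at hden2 ⊢
      rw [show (k:ℕ) + 2 = (k+1) + 1 from rfl, ha (k+1), hden2, hq (k+1), hc (k+1), hc (k+2)]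
      push_cast
      rw [div_eq_div_iff hq2.ne' (by positivity)]
      field_simp; ring
    have h2 : (1:ℝ) + ((k:ℝ)+1)/4 ≠ 0 := by positivity
    have h3 : (4:ℝ) * (1 + ((k:ℝ)+1)/4) - 1 ≠ 0 := by
      have hk0' := Nat.cast_nonneg (α := ℝ) k
      have : (0:ℝ) < 4 * (1 + ((k:ℝ)+1)/4) - 1 := by linarith
      exact ne_of_gt this
    have hD : (64:ℝ) * (1 - γ) ^ 2 * (1 + ((k:ℝ)+1)/4) * (4 * (1 + ((k:ℝ)+1)/4) - 1) ≠ 0 := by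
      have h4pos : (0:ℝ) < 4 * (1 + ((k:ℝ)+1)/4) - 1 := by
        have := Nat.cast_nonneg (α := ℝ) k; linarith
      positivity
    rw [eA1, eA2, eQ, eq_div_iff hD]
    field_simp
    ring
  have hpos : (0:ℝ) ≤
        (8 * (1 - γ) ^ 3 * (1 + ((k:ℝ)+1) / 4) * (16 * (1 + ((k:ℝ)+1) / 4) ^ 2 - 1)
          + 36 * (1 - γ) ^ 2 * (1 + ((k:ℝ)+1) / 4) * (4 * (1 + ((k:ℝ)+1) / 4) - 1)
          + 25 * γ) /
        (64 * (1 - γ) ^ 2 * (1 + ((k:ℝ)+1) / 4) * (4 * (1 + ((k:ℝ)+1) / 4) - 1)) := by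
    set S : ℝ := 1 + ((k:ℝ)+1)/4 with hS
    have hS1 : (1:ℝ) ≤ S := by rw [hS]; linarith
    have h16 : (0:ℝ) ≤ 16 * S ^ 2 - 1 := by nlinarith
    have h4 : (0:ℝ) ≤ 4 * S - 1 := by linarith
    have hA : (0:ℝ) ≤ 8 * (1 - γ) ^ 3 * S * (16 * S ^ 2 - 1) := by
      apply mul_nonneg (mul_nonneg (by positivity) (by linarith)) h16
    have hB : (0:ℝ) ≤ 36 * (1 - γ) ^ 2 * S * (4 * S - 1) := by
      apply mul_nonneg (mul_nonneg (by positivity) (by linarith)) h4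
    have hD : (0:ℝ) < 64 * (1 - γ) ^ 2 * S * (4 * S - 1) := by
      apply mul_pos (mul_pos (by positivity) (by linarith)) (by linarith)
    exact div_nonneg (by linarith) hD.le
  push_cast
  refine ⟨key, ?_⟩
  have := key
  push_cast at this ⊢
  linarith [hpos, this]
end

section
/- Fix γ ∈ [0,1), define c_t = 1 + γ/(4(1-γ)) + t/4, q_t = 1 + (1-γ) c_{t+1}, and a_t = c_{t-1} q_{t-1}² / (c_{t-1} - γ c_t) for t ≥ 1. Then for every integer t ≥ 1, a_t ≥ (1-γ)(1 + (t-1)/4)² ≥ (1-γ) t² / 16. -/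
/-- lower bound `a_t ≥ (1-γ)(1 + (t-1)/4)² ≥ (1-γ)t²/16` for `t ≥ 1`
(stated with `t+1` in place of `t ≥ 1` to avoid natural subtraction). -/
theorem a_seq_lower_bound
    (γ : ℝ) (hγ0 : 0 ≤ γ) (hγ1 : γ < 1)
    (c q a : ℕ → ℝ)
    (hc : ∀ t : ℕ, c t = 1 + γ / (4 * (1 - γ)) + (t : ℝ) / 4)
    (hq : ∀ t : ℕ, q t = 1 + (1 - γ) * c (t + 1))
    (ha : ∀ t : ℕ, a (t + 1) = c t * q t ^ 2 / (c t - γ * c (t + 1))) :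
    ∀ t : ℕ,
      (1 - γ) * (1 + (t : ℝ) / 4) ^ 2 ≤ a (t + 1) ∧
      (1 - γ) * ((t : ℝ) + 1) ^ 2 / 16 ≤ (1 - γ) * (1 + (t : ℝ) / 4) ^ 2 := by
  intro t
  have hε : (0:ℝ) < 1 - γ := by linarith
  have ht : (0:ℝ) ≤ (t:ℝ) := Nat.cast_nonneg t
  have hγd : 0 ≤ γ / (4 * (1 - γ)) := by positivity
  have hD : c t - γ * c (t + 1) = (1 - γ) * (1 + (t : ℝ) / 4) := by
    rw [hc, hc]; push_cast; field_simp; ring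
  have hDpos : 0 < c t - γ * c (t + 1) := by
    rw [hD]; apply mul_pos hε; linarith
  have hct : 1 + (t : ℝ) / 4 ≤ c t := by rw [hc]; linarith
  have hqt : (1 - γ) * (1 + (t : ℝ) / 4) ≤ q t := by
    have hqe : q t = 5/4 + (1 - γ) * (1 + (t : ℝ) / 4) := by
      rw [hq, hc]; push_cast; field_simp; ring
    rw [hqe]; linarith
  have hqpos : 0 ≤ q t := le_trans (by positivity) hqt
  constructor
  · rw [ha, le_div_iff₀ hDpos, hD]
    nlinarith [sq_nonneg (q t), mul_le_mul hqt hqt (by positivity) hqpos,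
      mul_pos hε (show (0:ℝ) < 1 + (t:ℝ)/4 by linarith), sq_nonneg (1 + (t:ℝ)/4)]
  · nlinarith [sq_nonneg ((t:ℝ) - 1)]
end

section
/- Let β > 0, γ_p > 0 and set γ_m = (1-β)γ_p. Consider sequences in ℝ^d satisfying z^{t+1} = z^t - γ_p g^t, x^{t+1} = β x^t + (1-β) z^{t+1}, b^t = (1/γ_m)(x^t - x^{t+1}), and y^{t+1} = y^t - γ_m (β b^t + g^t), with initialization such that x^0 = z^0 + γ_p β b^{-1} for some b^{-1} with b^{-1} satisfying the recursion b^t = β b^{t-1} + g^t. Then for every t ≥ 0: (i) b^t = β b^{t-1} + g^t; (ii) x^t = z^t + γ_p β b^{t-1}; (iii) b^t = (1/γ_p)(x^t - z^{t+1}); and (iv) y^{t+1} = y^t + (1-β)(z^{t+1} - z^t) + β(1-β)(z^{t+1} - x^t). -/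
/-- reduction of the GPA algorithm (with common momentum `β = βₓ = β_y`,
base step size `γ_p`, and `γ_m = (1-β)γ_p`) to its lookahead form, where `bm1` plays the
role of `b^{-1}`. -/
theorem gpa_lookahead_reduction
    (d : ℕ) (β γp γm : ℝ) (hβ0 : 0 < β) (hβ1 : β < 1) (hγp : 0 < γp)
    (hγm : γm = (1 - β) * γp)
    (x z y g b : ℕ → EuclideanSpace ℝ (Fin d)) (bm1 : EuclideanSpace ℝ (Fin d))
    (hz : ∀ t, z (t + 1) = z t - γp • g t)
    (hx : ∀ t, x (t + 1) = β • x t + (1 - β) • z (t + 1))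
    (hb : ∀ t, b t = (1 / γm) • (x t - x (t + 1)))
    (hy : ∀ t, y (t + 1) = y t - γm • (β • b t + g t))
    (hinit : x 0 = z 0 + (γp * β) • bm1) :
    (b 0 = β • bm1 + g 0 ∧ ∀ t, b (t + 1) = β • b t + g (t + 1)) ∧
    (x 0 = z 0 + (γp * β) • bm1 ∧ ∀ t, x (t + 1) = z (t + 1) + (γp * β) • b t) ∧
    (∀ t, b t = (1 / γp) • (x t - z (t + 1))) ∧
    (∀ t, y (t + 1) =
      y t + (1 - β) • (z (t + 1) - z t) + (β * (1 - β)) • (z (t + 1) - x t)) := by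
  have hγp0 : γp ≠ 0 := ne_of_gt hγp
  have hβ1' : (1 : ℝ) - β ≠ 0 := by nlinarith
  have hγm0 : γm ≠ 0 := by rw [hγm]; exact mul_ne_zero hβ1' hγp0
  -- (iii)
  have h3 : ∀ t, b t = (1 / γp) • (x t - z (t + 1)) := by
    intro t
    rw [hb t, hx t]
    simp only [hγm]
    match_scalars <;> field_simp <;> ring
  -- (ii)
  have h2 : ∀ t, x (t + 1) = z (t + 1) + (γp * β) • b t := by
    intro t
    rw [hx t, h3 t]
    match_scalars <;> field_simp <;> ring
  -- (i)
  have h1a : b 0 = β • bm1 + g 0 := by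
    have := h3 0
    rw [hz 0, hinit] at this
    rw [this]
    match_scalars <;> field_simp <;> ring
  have h1b : ∀ t, b (t + 1) = β • b t + g (t + 1) := by
    intro t
    have := h3 (t + 1)
    rw [hz (t + 1), h2 t] at this
    rw [this]
    match_scalars <;> field_simp <;> ring
  refine ⟨⟨h1a, h1b⟩, ⟨hinit, h2⟩, h3, ?_⟩
  intro t
  rw [hy t, h3 t, hz t, hγm]
  match_scalars <;> field_simp <;> ring
end

section
/- Let β > 0, K ≥ 1, and let A_0, A_1, …, A_{T-1} : ℝ^d → ℝ^d be arbitrary maps. Consider the SNOO recursion with Nesterov learning rate η = 1: for t = nK (n = 0, 1, …), θ̃^{t+K} = A_{t+K-1}(⋯ A_{t+1}(A_t(θ^t))), b'^{t+K} = β b'^t + (θ^t - θ̃^{t+K}), θ^{t+K} = θ^t - (β b'^{t+K} + (θ^t - θ̃^{t+K})). Define the lookahead recursion: x̃^{t+K} = A_{t+K-1}(⋯ A_{t+1}(A_t(x^t - β b^t))), b^{t+K} = x^t - x̃^{t+K}, x^{t+K} = x̃^{t+K}. If θ^0 = x^0 - β b^0 and b'^0 = b^0, then for every n ≥ 0 with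 t = nK: θ^t = x^t - β b^t and b'^t = b^t; in particular the SNOO output θ^T equals the lookahead output x^T - β b^T. -/
/-- `chainApply A t K v` applies the base optimizer maps `A t, A (t+1), …, A (t+K-1)`
consecutively to `v` (i.e. `A_{t+K-1}(⋯ A_{t+1}(A_t v))`). -/
def chainApply {E : Type*} (A : ℕ → E → E) (t : ℕ) : ℕ → E → E
  | 0, v => v
  | k + 1, v => A (t + k) (chainApply A t k v)

/-- SNOO with Nesterov learning rate `η = 1` is equivalent to the `K`-step
long-horizon lookahead recursion: if `θ⁰ = x⁰ - β b⁰` and `b'⁰ = b⁰`, then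
`θ^{nK} = x^{nK} - β b^{nK}` and `b'^{nK} = b^{nK}` for all `n` (sequences are indexed by
the outer-loop counter `n`, so index `n` stands for iteration `t = nK`). -/
theorem snoo_lookahead_equivalence
    (d : ℕ) (β : ℝ) (hβ : 0 < β) (K : ℕ) (hK : 1 ≤ K)
    (A : ℕ → EuclideanSpace ℝ (Fin d) → EuclideanSpace ℝ (Fin d))
    (θ b' x b : ℕ → EuclideanSpace ℝ (Fin d))
    (hb' : ∀ n, b' (n + 1) = β • b' n + (θ n - chainApply A (n * K) K (θ n)))
    (hθ : ∀ n, θ (n + 1) =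
      θ n - (β • b' (n + 1) + (θ n - chainApply A (n * K) K (θ n))))
    (hx : ∀ n, x (n + 1) = chainApply A (n * K) K (x n - β • b n))
    (hb : ∀ n, b (n + 1) = x n - chainApply A (n * K) K (x n - β • b n))
    (hθ0 : θ 0 = x 0 - β • b 0) (hb'0 : b' 0 = b 0) :
    ∀ n : ℕ, θ n = x n - β • b n ∧ b' n = b n := by
  intro n
  induction n with
  | zero => exact ⟨hθ0, hb'0⟩
  | succ n ih =>
    obtain ⟨hθn, hb'n⟩ := ih
    have hchain : chainApply A (n * K) K (θ n) = x (n + 1) := by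
      rw [hθn, hx n]
    have hb1 : b' (n + 1) = b (n + 1) := by
      rw [hb' n, hb'n, hchain, hθn, hb n, ← hx n]
      abel
    refine ⟨?_, hb1⟩
    rw [hθ n, hchain, hb1, hb n, ← hx n, hθn]
    abel
end
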